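/- R-max progress lemma: let π be an optimal policy for the empirical model (f̂, R̂) maintained by R-max. Then either π is optimal for the true MDP (f, R), or executing π from the start state visits at least one state-action pair not yet recorded in the empirical model. Consequently, R-max run for S·A episodes returns an optimal policy for any deterministic MDP, giving sample complexity at most S·A·T. -/

import Mathlib

open Finset Classical

/-- Total reward of playing a list of actions from state `s` in a deterministic MDP. -/
def seqReturn {S : Type*} (A : ℕ) (f : S → Fin A → S) (R : S → Fin A → ℝ) :
    S → List (Fin A) → ℝ
  | _, [] => 0
  | s, a :: rest => R s a + seqReturn A f R (f s a) rest

/-- Optimal value function by fuel recursion. -/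
noncomputable def optV {S : Type*} (A : ℕ) (f : S → Fin A → S) (R : S → Fin A → ℝ) :
    ℕ → S → ℝ
  | 0, _ => 0
  | n + 1, s => ⨆ a : Fin A, (R s a + optV A f R n (f s a))

/-- Optimal Q-function at timestep `t` (horizon `T`). -/
noncomputable def optQ {S : Type*} (A T : ℕ) (f : S → Fin A → S) (R : S → Fin A → ℝ)
    (t : ℕ) (s : S) (a : Fin A) : ℝ :=
  R s a + optV A f R (T - t) (f s a)

/-- Trajectory of a deterministic policy: `polState ... t` is the state at timestep `t+1`. -/
def polState {S : Type*} (A : ℕ) (f : S → Fin A → S) (p : ℕ → S → Fin A) (s1 : S) : ℕ → S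
  | 0 => s1
  | t + 1 => f (polState A f p s1 t) (p (t + 1) (polState A f p s1 t))

/-- Return of a deterministic policy over a `T`-step episode from `s1`. -/
noncomputable def polRet {S : Type*} (A T : ℕ) (f : S → Fin A → S) (R : S → Fin A → ℝ)
    (p : ℕ → S → Fin A) (s1 : S) : ℝ :=
  seqReturn A f R s1 (List.ofFn (fun i : Fin T => p (i + 1) (polState A f p s1 i)))

/-- Empirical transition model of R-max: unseen state-action pairs are self-loops. -/
noncomputable def fhat {S : Type*} (A : ℕ) (f : S → Fin A → S) (K : Set (S × Fin A)) :
    S → Fin A → S :=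
  fun s a => if (s, a) ∈ K then f s a else s

/-- Empirical reward model of R-max: unseen state-action pairs get reward `Rmax`. -/
noncomputable def Rhat {S : Type*} (A : ℕ) (R : S → Fin A → ℝ) (Rmax : ℝ)
    (K : Set (S × Fin A)) : S → Fin A → ℝ :=
  fun s a => if (s, a) ∈ K then R s a else Rmax

/-- State-action pairs visited when executing policy `p` from `s1` for `T` steps
in the true MDP. -/
def visited {S : Type*} (A T : ℕ) (f : S → Fin A → S) (p : ℕ → S → Fin A) (s1 : S) :
    Set (S × Fin A) :=
  {pair | ∃ t, t < T ∧
    pair = (polState A f p s1 t, p (t + 1) (polState A f p s1 t))}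

/-!
R-max is optimistic: in its model an unseen pair is a self-loop paying the maximal reward, so
the model's optimal value dominates the true one. If a model-optimal policy only visits seen
pairs, the model and the true MDP agree along its trajectory, so its true return equals its model
return, which is at least the true optimal value. Otherwise it visits an unseen pair, and the
seen set grows strictly; this can happen at most `S·A` times.
-/

section Trajectory

variable {S : Type*} {A : ℕ}

theorem polState_succ (f : S → Fin A → S) (p : ℕ → S → Fin A) (s1 : S) (t : ℕ) :
    polState A f p s1 (t + 1) = polState A f (fun t => p (t + 1)) (f s1 (p 1 s1)) t := by
  induction t with
  | zero => rfl
  | succ t ih => rw [polState, ih]; rfl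

theorem polRet_succ (T : ℕ) (f : S → Fin A → S) (R : S → Fin A → ℝ) (p : ℕ → S → Fin A)
    (s1 : S) :
    polRet A (T + 1) f R p s1
      = R s1 (p 1 s1) + polRet A T f R (fun t => p (t + 1)) (f s1 (p 1 s1)) := by
  simp only [polRet, List.ofFn_succ, seqReturn, Fin.val_zero, Fin.val_succ, polState_succ]
  rfl

theorem visited_succ (T : ℕ) (f : S → Fin A → S) (p : ℕ → S → Fin A) (s1 : S) :
    visited A (T + 1) f p s1
      = insert (s1, p 1 s1) (visited A T f (fun t => p (t + 1)) (f s1 (p 1 s1))) := by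
  ext x
  constructor
  · rintro ⟨_ | t, ht, rfl⟩
    · exact Or.inl rfl
    · exact Or.inr ⟨t, by omega, by rw [polState_succ]⟩
  · rintro (rfl | ⟨t, ht, rfl⟩)
    · exact ⟨0, by omega, rfl⟩
    · exact ⟨t + 1, by omega, by rw [polState_succ]⟩

theorem polRet_congr_of_visited (T : ℕ) {f f' : S → Fin A → S} {R R' : S → Fin A → ℝ}
    (p : ℕ → S → Fin A) (s1 : S)
    (h : ∀ x ∈ visited A T f p s1, f' x.1 x.2 = f x.1 x.2 ∧ R' x.1 x.2 = R x.1 x.2) :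
    polRet A T f' R' p s1 = polRet A T f R p s1 := by
  induction T generalizing p s1 with
  | zero => rfl
  | succ T ih =>
    rw [visited_succ] at h
    obtain ⟨hf, hR⟩ := h _ (Set.mem_insert _ _)
    rw [polRet_succ, polRet_succ, hf, hR, ih _ _ fun x hx => h x (Set.mem_insert_of_mem _ hx)]

theorem polRet_le_optV (T : ℕ) (f : S → Fin A → S) (R : S → Fin A → ℝ) (p : ℕ → S → Fin A)
    (s1 : S) : polRet A T f R p s1 ≤ optV A f R T s1 := by
  induction T generalizing p s1 with
  | zero => rfl
  | succ T ih =>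
    rw [polRet_succ, optV]
    calc R s1 (p 1 s1) + polRet A T f R (fun t => p (t + 1)) (f s1 (p 1 s1))
        ≤ R s1 (p 1 s1) + optV A f R T (f s1 (p 1 s1)) := by gcongr; exact ih _ _
      _ ≤ ⨆ a, (R s1 a + optV A f R T (f s1 a)) :=
        le_ciSup (f := fun a => R s1 a + optV A f R T (f s1 a)) (Finite.bddAbove_range _) _

end Trajectory

section Optimism

variable {S : Type*} {A : ℕ} (f : S → Fin A → S) (R : S → Fin A → ℝ) {Rmax : ℝ}

theorem optV_le_mul [Nonempty (Fin A)] (hR : ∀ s a, R s a ≤ Rmax) (n : ℕ) (s : S) :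
    optV A f R n s ≤ n * Rmax := by
  induction n generalizing s with
  | zero => simp [optV]
  | succ n ih =>
    rw [optV]
    refine ciSup_le fun a => ?_
    calc R s a + optV A f R n (f s a) ≤ Rmax + n * Rmax := add_le_add (hR s a) (ih _)
      _ = (n + 1 : ℕ) * Rmax := by push_cast; ring

/-- Staying forever on an unseen pair earns `Rmax` per step in the model. -/
theorem mul_le_optV_fhat_of_notMem (K : Set (S × Fin A)) {s : S} {a : Fin A} (ha : (s, a) ∉ K)
    (n : ℕ) : n * Rmax ≤ optV A (fhat A f K) (Rhat A R Rmax K) n s := by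
  induction n with
  | zero => simp [optV]
  | succ n ih =>
    rw [optV]
    calc ((n + 1 : ℕ) : ℝ) * Rmax
        = Rhat A R Rmax K s a + n * Rmax := by simp only [Rhat, if_neg ha]; push_cast; ring
      _ ≤ Rhat A R Rmax K s a + optV A (fhat A f K) (Rhat A R Rmax K) n (fhat A f K s a) := by
        simp only [fhat, if_neg ha]; gcongr
      _ ≤ _ := le_ciSup (f := fun a => Rhat A R Rmax K s a
          + optV A (fhat A f K) (Rhat A R Rmax K) n (fhat A f K s a)) (Finite.bddAbove_range _) a

theorem optV_le_optV_fhat (hR : ∀ s a, R s a ≤ Rmax) (K : Set (S × Fin A)) (n : ℕ) (s : S) :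
    optV A f R n s ≤ optV A (fhat A f K) (Rhat A R Rmax K) n s := by
  induction n generalizing s with
  | zero => rfl
  | succ n ih =>
    refine ciSup_mono (Finite.bddAbove_range _) fun a => ?_
    by_cases ha : (s, a) ∈ K
    · simp only [Rhat, fhat, if_pos ha]
      gcongr
      exact ih _
    · have : Nonempty (Fin A) := ⟨a⟩
      simp only [Rhat, fhat, if_neg ha]
      gcongr
      · exact hR s a
      · exact (optV_le_mul f R hR n _).trans (mul_le_optV_fhat_of_notMem f R K ha n)

theorem rmax_progress (T : ℕ) (hR : ∀ s a, R s a ≤ Rmax) (s1 : S) (K : Set (S × Fin A))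
    (p : ℕ → S → Fin A)
    (hp : polRet A T (fhat A f K) (Rhat A R Rmax K) p s1
        = optV A (fhat A f K) (Rhat A R Rmax K) T s1) :
    polRet A T f R p s1 = optV A f R T s1 ∨ ∃ x ∈ visited A T f p s1, x ∉ K := by
  by_cases hK : visited A T f p s1 ⊆ K
  · left
    have hagree : polRet A T (fhat A f K) (Rhat A R Rmax K) p s1 = polRet A T f R p s1 :=
      polRet_congr_of_visited T p s1 fun x hx => by
        simp only [fhat, Rhat, if_pos (hK hx), and_self]
    refine (polRet_le_optV T f R p s1).antisymm ?_
    calc optV A f R T s1 ≤ optV A (fhat A f K) (Rhat A R Rmax K) T s1 :=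
          optV_le_optV_fhat f R hR K T s1
      _ = polRet A T f R p s1 := hp.symm.trans hagree
  · exact Or.inr (Set.not_subset.mp hK)

end Optimism

section StrictChain

variable {α : Type*} [Finite α]

theorem le_ncard_of_ssubset_succ {Ks : ℕ → Set α} {n : ℕ} (h : ∀ j < n, Ks j ⊂ Ks (j + 1)) :
    n ≤ (Ks n).ncard := by
  induction n with
  | zero => exact Nat.zero_le _
  | succ n ih =>
    exact (ih fun j hj => h j (by omega)).trans_lt
      (Set.ncard_lt_ncard (h n (by omega)) (Set.toFinite _))

theorem exists_le_natCard_of_ssubset_succ (Ks : ℕ → Set α) {P : ℕ → Prop}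
    (h : ∀ j, ¬ P j → Ks j ⊂ Ks (j + 1)) : ∃ j ≤ Nat.card α, P j := by
  by_contra! hP
  have hlow := le_ncard_of_ssubset_succ (n := Nat.card α + 1) fun j hj => h j (hP j (by omega))
  have hup := Set.ncard_le_card (Ks (Nat.card α + 1))
  omega

end StrictChain

theorem rmax_progress_and_sample_complexity_general
    {S : Type*} [Fintype S] (A T : ℕ)
    (f : S → Fin A → S) (R : S → Fin A → ℝ) (s1 : S)
    (Rmax : ℝ) (hRmax : Rmax = ⨆ p : S × Fin A, R p.1 p.2) :
    -- (a) progress lemma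
    (∀ (K : Set (S × Fin A)) (p : ℕ → S → Fin A),
      polRet A T (fhat A f K) (Rhat A R Rmax K) p s1
          = optV A (fhat A f K) (Rhat A R Rmax K) T s1 →
      (polRet A T f R p s1 = optV A f R T s1 ∨
        ∃ pair ∈ visited A T f p s1, pair ∉ K)) ∧
    -- (b) R-max finds an optimal policy within S·A episodes
    (∀ (Ks : ℕ → Set (S × Fin A)) (ps : ℕ → ℕ → S → Fin A),
      Ks 0 = ∅ →
      (∀ j, polRet A T (fhat A f (Ks j)) (Rhat A R Rmax (Ks j)) (ps j) s1
          = optV A (fhat A f (Ks j)) (Rhat A R Rmax (Ks j)) T s1) →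
      (∀ j, Ks (j + 1) = Ks j ∪ visited A T f (ps j) s1) →
      ∃ j ≤ Fintype.card S * A, polRet A T f R (ps j) s1 = optV A f R T s1) := by
  have hR : ∀ s a, R s a ≤ Rmax := fun s a =>
    hRmax ▸ le_ciSup (f := fun x : S × Fin A => R x.1 x.2) (Finite.bddAbove_range _) (s, a)
  refine ⟨fun K p => rmax_progress f R T hR s1 K p, fun Ks ps _ hps hKs => ?_⟩
  have hcard : Nat.card (S × Fin A) = Fintype.card S * A := by simp
  rw [← hcard]
  refine exists_le_natCard_of_ssubset_succ Ks fun j hj => ?_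
  obtain ⟨x, hx, hxK⟩ := (rmax_progress f R T hR s1 (Ks j) (ps j) (hps j)).resolve_left hj
  rw [hKs j]
  exact Set.ssubset_iff_of_subset Set.subset_union_left |>.mpr ⟨x, Or.inr hx, hxK⟩

/--
R-max progress lemma and sample complexity.  Let `Rmax = max_{s,a} R(s,a)`.
(a) If a deterministic policy `p` is optimal for R-max's empirical model built from the
seen set `K` (i.e. its model return equals the model's optimal value), then either `p` is
optimal for the true MDP, or executing `p` from the start state visits a state-action pair
not in `K`.
(b) Consequently, running R-max — starting with `K₀ = ∅`, at each episode `j` executing a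
policy `p j` that is optimal for the current model and adding the visited pairs to the
model — produces an optimal policy for the true MDP within `S·A` episodes (hence sample
complexity at most `S·A·T` timesteps).
-/
theorem rmax_progress_and_sample_complexity
    {S : Type*} [Fintype S] [Nonempty S] (A T : ℕ) (hApos : 0 < A)
    (f : S → Fin A → S) (R : S → Fin A → ℝ) (s1 : S)
    (Rmax : ℝ) (hRmax : Rmax = ⨆ p : S × Fin A, R p.1 p.2) :
    -- (a) progress lemma
    (∀ (K : Set (S × Fin A)) (p : ℕ → S → Fin A),
      polRet A T (fhat A f K) (Rhat A R Rmax K) p s1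
          = optV A (fhat A f K) (Rhat A R Rmax K) T s1 →
      (polRet A T f R p s1 = optV A f R T s1 ∨
        ∃ pair ∈ visited A T f p s1, pair ∉ K)) ∧
    -- (b) R-max finds an optimal policy within S·A episodes
    (∀ (Ks : ℕ → Set (S × Fin A)) (ps : ℕ → ℕ → S → Fin A),
      Ks 0 = ∅ →
      (∀ j, polRet A T (fhat A f (Ks j)) (Rhat A R Rmax (Ks j)) (ps j) s1
          = optV A (fhat A f (Ks j)) (Rhat A R Rmax (Ks j)) T s1) →
      (∀ j, Ks (j + 1) = Ks j ∪ visited A T f (ps j) s1) →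
      ∃ j ≤ Fintype.card S * A, polRet A T f R (ps j) s1 = optV A f R T s1) :=
  rmax_progress_and_sample_complexity_general A T f R s1 Rmax hRmax
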